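/- arXiv:2501.09582 — 3 statements merged into one kernel-verified Lean document; each statement's English description precedes it below -/
import Mathlib

section
/- Let m ≥ 1 and k ≥ 3 be integers and q ∈ (q_{k−1}, 2). For 0 ≤ i ≤ m define L_i(q) = g_{q,k}^i(1) and R_i(q) = g_{q,k}^i(1 + q^{−(m−i)k} π_q(0^{k−3}(01^{k−1})^∞)), and define L_Q(q) = g_{q,k}^m(π_q(1^{k−3}(10^{k−1})^∞)) and R_Q(q) = g_{q,k}^m(1/(q−1)). Then all the interval lengths agree: R_0(q) − L_0(q) = ⋯ = R_m(q) − L_m(q) = R_Q(q) − L_Q(q) = q^{−(m+1)k+2} π_q((1^{k−1}0)^∞). -/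
open Set

/-- Projection map: the value of the (0-indexed) digit sequence `a` in base `q`,
`π_q(a) = Σ_{j=0}^∞ a_j q^{-(j+1)}`. -/
noncomputable def piQ (q : ℝ) (a : ℕ → ℝ) : ℝ := ∑' j : ℕ, a j / q ^ (j + 1)

/-- `a` is a sequence of digits in `{0,1}`. -/
def IsDigitSeq (a : ℕ → ℝ) : Prop := ∀ j, a j = 0 ∨ a j = 1

/-- `a` is a sequence of digits in `{-1,0,1}`. -/
def IsExtDigitSeq (a : ℕ → ℝ) : Prop := ∀ j, a j = -1 ∨ a j = 0 ∨ a j = 1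

/-- The set of base-`q` expansions of `x`. -/
def SigmaSet (q x : ℝ) : Set (ℕ → ℝ) := {a | IsDigitSeq a ∧ piQ q a = x}

/-- The interval `I_q = [0, 1/(q-1)]`. -/
def Iq (q : ℝ) : Set ℝ := Set.Icc 0 (1 / (q - 1))

/-- The switch region `J_q = [1/q, 1/(q(q-1))]`. -/
def Jq (q : ℝ) : Set ℝ := Set.Icc (1 / q) (1 / (q * (q - 1)))

/-- The set of points of `I_q` having exactly `m` base-`q` expansions. -/
def UqM (q : ℝ) (m : ℕ∞) : Set ℝ := {x | x ∈ Iq q ∧ (SigmaSet q x).encard = m}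

/-- The set of points of `I_q` having a unique base-`q` expansion. -/
def Uq (q : ℝ) : Set ℝ := UqM q 1

/-- `B_m`: the set of bases `q ∈ (1,2)` for which some point has exactly `m` expansions. -/
def Bset (m : ℕ∞) : Set ℝ := {q | q ∈ Set.Ioo (1 : ℝ) 2 ∧ (UqM q m).Nonempty}

/-- `x` is the `k`-Bonacci number: the root in `(1,2)` of `x^k = x^{k-1} + ⋯ + x + 1`. -/
def IsBonacci (k : ℕ) (x : ℝ) : Prop :=
  x ∈ Set.Ioo (1 : ℝ) 2 ∧ x ^ k = ∑ i ∈ Finset.range k, x ^ i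

/-- `a` contains no occurrence of the word `01^k` as a consecutive block. -/
def AvoidsWord01 (k : ℕ) (a : ℕ → ℝ) : Prop :=
  ∀ i, ¬(a i = 0 ∧ ∀ j, 1 ≤ j → j ≤ k → a (i + j) = 1)

/-- `a` contains no occurrence of the word `10^k` as a consecutive block. -/
def AvoidsWord10 (k : ℕ) (a : ℕ → ℝ) : Prop :=
  ∀ i, ¬(a i = 1 ∧ ∀ j, 1 ≤ j → j ≤ k → a (i + j) = 0)

/-- `S_k`: the set of `{0,1}`-sequences avoiding the words `01^k` and `10^k`. -/
def Sset (k : ℕ) : Set (ℕ → ℝ) := {a | IsDigitSeq a ∧ AvoidsWord01 k a ∧ AvoidsWord10 k a}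

/-- `g_{q,k} = f_1^{-(k-1)} ∘ f_0^{-1}`, where `f_0^{-1}(y) = y/q` and `f_1^{-1}(y) = (y+1)/q`. -/
noncomputable def gMap (q : ℝ) (k : ℕ) (x : ℝ) : ℝ := (fun y => (y + 1) / q)^[k - 1] (x / q)

/-- The maps `f_0(x) = qx` (for `b = false`) and `f_1(x) = qx - 1` (for `b = true`). -/
noncomputable def fDigit (q : ℝ) (b : Bool) (x : ℝ) : ℝ := if b then q * x - 1 else q * x

/-- `(a, b)` is a bounded gap of `C`: a bounded connected component of `ℝ \ C`. -/
def IsGap (C : Set ℝ) (a b : ℝ) : Prop :=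
  a < b ∧ a ∈ C ∧ b ∈ C ∧ Set.Ioo a b ∩ C = ∅

/-- The left endpoint of the bridge of `C` lying immediately to the left of the gap `(a, b)`:
the right endpoint of the nearest gap to the left having diameter at least `b - a`
(or `min C` if there is no such gap). -/
noncomputable def leftBridgeStart (C : Set ℝ) (a b : ℝ) : ℝ :=
  sSup ({sInf C} ∪ {d | ∃ c, IsGap C c d ∧ d ≤ a ∧ b - a ≤ d - c})

/-- The right endpoint of the bridge of `C` lying immediately to the right of the gap `(a, b)`. -/
noncomputable def rightBridgeEnd (C : Set ℝ) (a b : ℝ) : ℝ :=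
  sInf ({sSup C} ∪ {c | ∃ d, IsGap C c d ∧ b ≤ c ∧ b - a ≤ d - c})

/-- The (Newhouse) thickness of a compact set `C ⊆ ℝ`: the infimum over all bounded gaps `G`
of the ratio of the length of the bridge on either side of `G` to the length of `G`
(`∞` if `C` has no bounded gap). -/
noncomputable def thickness (C : Set ℝ) : ENNReal :=
  ⨅ p : {p : ℝ × ℝ // IsGap C p.1 p.2},
    ENNReal.ofReal
      (min ((p.1.1 - leftBridgeStart C p.1.1 p.1.2) / (p.1.2 - p.1.1))
        ((rightBridgeEnd C p.1.1 p.1.2 - p.1.2) / (p.1.2 - p.1.1)))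

/-- `B` is contained in a gap of `A`, i.e. in a connected component of `ℝ \ A`. -/
def ContainedInGap (B A : Set ℝ) : Prop :=
  ∃ x ∈ Aᶜ, B ⊆ connectedComponentIn Aᶜ x

/-- Two sets are interleaved if neither is contained in a gap of the other. -/
def Interleaved (A B : Set ℝ) : Prop :=
  ¬ContainedInGap B A ∧ ¬ContainedInGap A B

/-- `A` and `B` are `ε`-strongly interleaved: any compact sets within Hausdorff distance `ε`
of `A` and `B` respectively are interleaved. -/
def StronglyInterleaved (ε : ℝ) (A B : Set ℝ) : Prop :=
  ∀ A' B' : Set ℝ, IsCompact A' → IsCompact B' →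
    EMetric.hausdorffEdist A A' ≤ ENNReal.ofReal ε →
    EMetric.hausdorffEdist B B' ≤ ENNReal.ofReal ε → Interleaved A' B'

/-- The sequence `0^{k-3}(01^{k-1})^∞` (0-indexed). -/
noncomputable def seqG (k : ℕ) : ℕ → ℝ := fun j =>
  if j < k - 3 then 0 else if (j - (k - 3)) % k = 0 then 0 else 1

/-- The sequence `1^{k-3}(10^{k-1})^∞` (0-indexed). -/
noncomputable def seqH (k : ℕ) : ℕ → ℝ := fun j =>
  if j < k - 3 then 1 else if (j - (k - 3)) % k = 0 then 1 else 0

/-- The sequence `(1^{k-1}0)^∞` (0-indexed). -/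
noncomputable def seqP (k : ℕ) : ℕ → ℝ := fun j => if j % k = k - 1 then 0 else 1

/-!
`g_{q,k}` is affine with slope `q^{-k}`, so `g_{q,k}^i` scales every difference by `q^{-ik}`.
The digits of `0^{k-3}(01^{k-1})^∞` and `1^{k-3}(10^{k-1})^∞` are complementary, so
`1/(q-1) - π_q(1^{k-3}(10^{k-1})^∞) = π_q(0^{k-3}(01^{k-1})^∞)`; and the latter sequence is
`0^{k-2}` followed by `(1^{k-1}0)^∞`, so its value is `q^{-(k-2)} π_q((1^{k-1}0)^∞)`.
Each of the `m + 2` differences is therefore `q^{-(m+1)k+2} π_q((1^{k-1}0)^∞)`.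
-/

theorem iterate_sub_of_sub_eq_mul {f : ℝ → ℝ} {c : ℝ} (hf : ∀ x y, f x - f y = c * (x - y))
    (n : ℕ) (x y : ℝ) :
    f^[n] x - f^[n] y = c ^ n * (x - y) := by
  induction n with
  | zero => simp
  | succ n ih => rw [Function.iterate_succ_apply', Function.iterate_succ_apply', hf, ih, pow_succ',
      mul_assoc]

theorem gMap_sub {k : ℕ} (hk : 1 ≤ k) (q x y : ℝ) :
    gMap q k x - gMap q k y = q⁻¹ ^ k * (x - y) := by
  have hstep : ∀ x y : ℝ, (x + 1) / q - (y + 1) / q = q⁻¹ * (x - y) := fun x y => by ring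
  rw [gMap, gMap, iterate_sub_of_sub_eq_mul hstep, ← pow_sub_one_mul (by omega : k ≠ 0)]
  ring

theorem gMap_iterate_sub {k : ℕ} (hk : 1 ≤ k) (q : ℝ) (i : ℕ) (x y : ℝ) :
    (gMap q k)^[i] x - (gMap q k)^[i] y = q ^ (-((i : ℤ) * k)) * (x - y) := by
  rw [iterate_sub_of_sub_eq_mul (gMap_sub hk q), ← pow_mul, inv_pow, ← zpow_natCast, ← zpow_neg,
    Nat.cast_mul, mul_comm (k : ℤ)]

section Projection

variable {q : ℝ} {a b : ℕ → ℝ}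

theorem IsDigitSeq.summable (ha : IsDigitSeq a) (hq : 1 < q) :
    Summable fun j => a j / q ^ (j + 1) := by
  have hgeo : Summable fun j : ℕ => q⁻¹ ^ (j + 1) :=
    (summable_nat_add_iff 1).2
      (summable_geometric_of_lt_one (by positivity) (inv_lt_one_of_one_lt₀ hq))
  refine hgeo.of_nonneg_of_le (fun j => ?_) (fun j => ?_) <;> rcases ha j with h | h <;>
    simp [h, inv_pow] <;> positivity

theorem piQ_add (ha : Summable fun j => a j / q ^ (j + 1))
    (hb : Summable fun j => b j / q ^ (j + 1)) : piQ q (a + b) = piQ q a + piQ q b := by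
  simp only [piQ, Pi.add_apply, add_div]
  exact ha.tsum_add hb

theorem piQ_one (hq : 1 < q) : piQ q 1 = 1 / (q - 1) := by
  have hq0 : q ≠ 0 := by positivity
  have hq1 : q - 1 ≠ 0 := sub_ne_zero.2 hq.ne'
  have hterm : ∀ j : ℕ, 1 / q ^ (j + 1) = q⁻¹ ^ j * q⁻¹ := fun j => by
    rw [← pow_succ, inv_pow, one_div]
  simp only [piQ, Pi.one_apply, hterm]
  rw [tsum_mul_right, tsum_geometric_of_lt_one (by positivity) (inv_lt_one_of_one_lt₀ hq)]
  field_simp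

theorem piQ_eq_zpow_mul_piQ_shift (ha : Summable fun j => a j / q ^ (j + 1)) (n : ℕ)
    (hzero : ∀ j < n, a j = 0) : piQ q a = q ^ (-(n : ℤ)) * piQ q (fun j => a (j + n)) := by
  rw [piQ, ← ha.sum_add_tsum_nat_add n, Finset.sum_eq_zero (fun j hj => by
    rw [hzero j (Finset.mem_range.1 hj), zero_div]), zero_add, piQ, ← tsum_mul_left]
  congr 1 with j
  rw [zpow_neg, zpow_natCast, add_right_comm, pow_add]
  field_simp

end Projection

section Sequences

variable {k : ℕ}

theorem isDigitSeq_seqG : IsDigitSeq (seqG k) := fun j => by unfold seqG; split_ifs <;> simp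

theorem isDigitSeq_seqH : IsDigitSeq (seqH k) := fun j => by unfold seqH; split_ifs <;> simp

theorem seqH_add_seqG : seqH k + seqG k = 1 := by
  ext j; simp only [seqH, seqG, Pi.add_apply, Pi.one_apply]; split_ifs <;> norm_num

theorem seqG_add_sub_two (hk : 3 ≤ k) (j : ℕ) : seqG k (j + (k - 2)) = seqP k j := by
  have hmod : (j + 1) % k = 0 ↔ j % k = k - 1 := by
    have hlt := Nat.mod_lt j (by omega : 0 < k)
    rw [Nat.add_mod, Nat.mod_eq_of_lt (by omega : 1 < k)]
    rcases Nat.lt_or_ge (j % k + 1) k with h | h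
    · rw [Nat.mod_eq_of_lt h]; omega
    · rw [show j % k + 1 = k by omega, Nat.mod_self]; omega
  simp only [seqG, seqP, show ¬ j + (k - 2) < k - 3 by omega, if_false,
    show j + (k - 2) - (k - 3) = j + 1 by omega, hmod]

theorem piQ_seqG (hk : 3 ≤ k) {q : ℝ} (hq : 1 < q) :
    piQ q (seqG k) = q ^ (-(k : ℤ) + 2) * piQ q (seqP k) := by
  rw [piQ_eq_zpow_mul_piQ_shift (isDigitSeq_seqG.summable hq) (k - 2)
    (fun j hj => by simp [seqG, show j - (k - 3) = 0 by omega]), funext (seqG_add_sub_two hk)]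
  congr 2
  omega

theorem piQ_seqH_add_piQ_seqG {q : ℝ} (hq : 1 < q) :
    piQ q (seqH k) + piQ q (seqG k) = 1 / (q - 1) := by
  rw [← piQ_add (isDigitSeq_seqH.summable hq) (isDigitSeq_seqG.summable hq), seqH_add_seqG,
    piQ_one hq]

end Sequences

theorem P_and_Q_common_diameter_general
    (m k : ℕ) (hk : 3 ≤ k) (qk1 : ℝ) (hqk1 : IsBonacci (k - 1) qk1)
    (q : ℝ) (hq : q ∈ Set.Ioo qk1 2) :
    (∀ i ≤ m,
        (gMap q k)^[i] (1 + q ^ (-(((m : ℤ) - (i : ℤ)) * (k : ℤ))) * piQ q (seqG k)) -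
            (gMap q k)^[i] 1 =
          q ^ (-(((m : ℤ) + 1) * (k : ℤ)) + 2) * piQ q (seqP k)) ∧
      (gMap q k)^[m] (1 / (q - 1)) - (gMap q k)^[m] (piQ q (seqH k)) =
        q ^ (-(((m : ℤ) + 1) * (k : ℤ)) + 2) * piQ q (seqP k) := by
  have h1q : 1 < q := hqk1.1.1.trans hq.1
  have hq0 : q ≠ 0 := by positivity
  have hk1 : 1 ≤ k := by omega
  refine ⟨fun i _ => ?_, ?_⟩
  · rw [gMap_iterate_sub hk1, add_sub_cancel_left, piQ_seqG hk h1q, ← mul_assoc, ← mul_assoc,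
      ← zpow_add₀ hq0, ← zpow_add₀ hq0]
    congr 2
    ring
  · rw [gMap_iterate_sub hk1, ← piQ_seqH_add_piQ_seqG h1q, add_sub_cancel_left, piQ_seqG hk h1q,
      ← mul_assoc, ← zpow_add₀ hq0]
    congr 2
    ring

theorem P_and_Q_common_diameter
    (m k : ℕ) (hm : 1 ≤ m) (hk : 3 ≤ k) (qk1 : ℝ) (hqk1 : IsBonacci (k - 1) qk1)
    (q : ℝ) (hq : q ∈ Set.Ioo qk1 2) :
    (∀ i ≤ m,
        (gMap q k)^[i] (1 + q ^ (-(((m : ℤ) - (i : ℤ)) * (k : ℤ))) * piQ q (seqG k)) -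
            (gMap q k)^[i] 1 =
          q ^ (-(((m : ℤ) + 1) * (k : ℤ)) + 2) * piQ q (seqP k)) ∧
      (gMap q k)^[m] (1 / (q - 1)) - (gMap q k)^[m] (piQ q (seqH k)) =
        q ^ (-(((m : ℤ) + 1) * (k : ℤ)) + 2) * piQ q (seqP k) :=
  P_and_Q_common_diameter_general m k hk qk1 hqk1 q hq
end

section
/- Let k ≥ 9 be an integer. If q ∈ (1,2) satisfies |q − q_k| ≤ q_k^{−2k−6}, then there exists a sequence (c_j) ∈ {−1,0,1}^ℕ with π_q((c_j)) = 1 such that (c_j) begins with k ones followed by k+4 zeros, and the tail (c_j)_{j≥2k+5} is an infinite concatenation of blocks from W_2 = {(−1,0), (0,−1), (0,0), (0,1), (1,0)}. -/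
open Set

/-!
Put `S(q) = ∑_{j<k} q^{-(j+1)}`, so that `S(q_k) = 1`. After the prefix `1^k 0^(k+4)` the tail
must represent `x = q^{2k+4} (1 - S(q))`. Read in base `q²`, a block `(a, b) ∈ W₂` is the digit
`q a + b ∈ {0, ±1, ±q}`; these digits are at most `1` apart, so the greedy algorithm expands every
`|x| ≤ 1/2`. Finally `|x| ≤ 1/2` holds because `|1 - S(q)| = |S(q_k) - S(q)|` is at most about
`|q - q_k| ≤ q_k^{-2k-6}` (mean value theorem), while `(q / q_k)^{2k+4}` stays close to `1`;
so `|x|` is about `q_k^{-2} ≈ 1/4`.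
-/

open Finset Filter Topology

lemma IsExtDigitSeq.abs_le_one {c : ℕ → ℝ} (hc : IsExtDigitSeq c) (j : ℕ) : |c j| ≤ 1 := by
  rcases hc j with h | h | h <;> simp [h]

lemma summable_div_pow_succ_of_abs_le_one {q : ℝ} (hq : 1 < q) {c : ℕ → ℝ}
    (hc : ∀ j, |c j| ≤ 1) : Summable fun j => c j / q ^ (j + 1) := by
  have hq0 : 0 < q := by linarith
  refine .of_norm_bounded (summable_geometric_of_lt_one (inv_nonneg.2 hq0.le)
    (inv_lt_one_of_one_lt₀ hq)) fun j => ?_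
  rw [Real.norm_eq_abs, abs_div, abs_of_pos (pow_pos hq0 _), inv_pow, ← one_div]
  exact div_le_div₀ zero_le_one (hc j) (pow_pos hq0 j) (pow_le_pow_right₀ hq.le j.le_succ)

lemma piQ_eq_sum_range_add {q : ℝ} {c : ℕ → ℝ} (hs : Summable fun j => c j / q ^ (j + 1))
    (m : ℕ) :
    piQ q c = ∑ j ∈ range m, c j / q ^ (j + 1) + piQ q (fun j => c (j + m)) / q ^ m := by
  rw [piQ, ← hs.sum_add_tsum_nat_add m, piQ, ← tsum_div_const]
  congr 2 with j
  rw [add_right_comm, pow_add, div_div]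

theorem exists_hasSum_of_forall_near {ι : Type*} (v : ι → ℝ) {β r x : ℝ} (hβ : 1 < β)
    (hnear : ∀ y, |y| ≤ β * r → ∃ i, |y - v i| ≤ r) (hx : |x| ≤ r) :
    ∃ d : ℕ → ι, HasSum (fun n => v (d n) / β ^ (n + 1)) x := by
  have hβ0 : 0 < β := by linarith
  have hr : 0 ≤ r := (abs_nonneg x).trans hx
  have hβx : |β * x| ≤ β * r := by rw [abs_mul, abs_of_pos hβ0]; gcongr
  obtain ⟨i₀, -⟩ := hnear _ hβx
  have hnear' : ∀ y, ∃ i, |y| ≤ β * r → |y - v i| ≤ r := fun y =>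
    if h : |y| ≤ β * r then (hnear y h).imp fun _ hi _ => hi else ⟨i₀, fun h' => absurd h' h⟩
  choose g hg using hnear'
  -- `y n` is the rescaled remainder after `n` greedy steps
  let y : ℕ → ℝ := fun n => (fun z => β * (z - v (g z)))^[n] (β * x)
  have hy_succ : ∀ n, y (n + 1) = β * (y n - v (g (y n))) := fun n =>
    Function.iterate_succ_apply' _ n _
  have hy_le : ∀ n, |y n| ≤ β * r := by
    intro n
    induction n with
    | zero => exact hβx
    | succ n ih => rw [hy_succ, abs_mul, abs_of_pos hβ0]; gcongr; exact hg _ ih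
  have hpartial : ∀ N, ∑ n ∈ range N, v (g (y n)) / β ^ (n + 1) = x - y N / β ^ (N + 1) := by
    intro N
    induction N with
    | zero => simp [y, hβ0.ne']
    | succ N ih => rw [sum_range_succ, ih, hy_succ, pow_succ]; field_simp; ring
  have hv : ∀ n, |v (g (y n))| ≤ (β + 1) * r := fun n => by
    have h₁ := hy_le n
    have h₂ := hg _ h₁
    have h₃ := abs_sub_abs_le_abs_sub (v (g (y n))) (y n)
    rw [abs_sub_comm] at h₃
    linarith
  have hsum : Summable fun n => v (g (y n)) / β ^ (n + 1) := by
    refine .of_norm_bounded ((summable_geometric_of_lt_one (inv_nonneg.2 hβ0.le)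
      (inv_lt_one_of_one_lt₀ hβ)).mul_left ((β + 1) * r)) fun n => ?_
    rw [Real.norm_eq_abs, abs_div, abs_of_pos (pow_pos hβ0 _), inv_pow, ← div_eq_mul_inv]
    exact div_le_div₀ (by positivity) (hv n) (pow_pos hβ0 n) (pow_le_pow_right₀ hβ.le n.le_succ)
  have hrem : Tendsto (fun N => y N / β ^ (N + 1)) atTop (𝓝 0) := by
    refine squeeze_zero_norm (a := fun N => r * β⁻¹ ^ N) (fun N => ?_) ?_
    · rw [Real.norm_eq_abs, abs_div, abs_of_pos (pow_pos hβ0 _), inv_pow, ← div_eq_mul_inv,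
        div_le_div_iff₀ (pow_pos hβ0 _) (pow_pos hβ0 _), pow_succ]
      nlinarith [hy_le N, pow_pos hβ0 N]
    · simpa using (tendsto_pow_atTop_nhds_zero_of_lt_one (inv_nonneg.2 hβ0.le)
        (inv_lt_one_of_one_lt₀ hβ)).const_mul r
  refine ⟨g ∘ y, hsum.hasSum_iff_tendsto_nat.2 ?_⟩
  simpa [hpartial] using tendsto_const_nhds.sub hrem

def W2 : Set (ℝ × ℝ) := {(-1, 0), (0, -1), (0, 0), (0, 1), (1, 0)}

lemma isExtDigitSeq_of_forall_mem_W2 {d : ℕ → ℝ} (hd : ∀ n, (d (2 * n), d (2 * n + 1)) ∈ W2) :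
    IsExtDigitSeq d := by
  intro j
  have h := hd (j / 2)
  simp only [W2, Set.mem_insert_iff, Set.mem_singleton_iff, Prod.mk.injEq] at h
  obtain ⟨n, rfl | rfl⟩ := Nat.even_or_odd' j <;>
  simp only [show (2 * n + 1) / 2 = n by omega, show 2 * n / 2 = n by omega] at h <;>
  rcases h with h | h | h | h | h <;> simp [h]

/-- The block values `q a + b` are `0, ±1, ±q`: consecutive ones are at most `1` apart, and
`q ^ 2 / 2 ≤ q + 1 / 2`. -/
lemma exists_mem_W2_abs_sub_le {q y : ℝ} (hq0 : 0 ≤ q) (hq2 : q ≤ 2)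
    (hy : |y| ≤ q ^ 2 * (1 / 2)) : ∃ p ∈ W2, |y - (q * p.1 + p.2)| ≤ 1 / 2 := by
  rw [abs_le] at hy
  simp only [W2, Set.mem_insert_iff, Set.mem_singleton_iff, exists_eq_or_imp, exists_eq_left,
    abs_le]
  rcases le_total ((1 + q) / 2) y with h₁ | h₁
  · right; right; right; right; constructor <;> nlinarith
  rcases le_total (1 / 2) y with h₂ | h₂
  · right; right; right; left; constructor <;> linarith
  rcases le_total (-(1 / 2)) y with h₃ | h₃
  · right; right; left; constructor <;> linarith
  rcases le_total (-((1 + q) / 2)) y with h₄ | h₄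
  · right; left; constructor <;> linarith
  · left; constructor <;> nlinarith

theorem exists_W2_expansion {q x : ℝ} (hq1 : 1 < q) (hq2 : q ≤ 2) (hx : |x| ≤ 1 / 2) :
    ∃ d : ℕ → ℝ, (∀ n, (d (2 * n), d (2 * n + 1)) ∈ W2) ∧ piQ q d = x := by
  have hq0 : 0 < q := by linarith
  have hnear : ∀ y, |y| ≤ q ^ 2 * (1 / 2) → ∃ p : W2, |y - (q * p.1.1 + p.1.2)| ≤ 1 / 2 :=
    fun y hy => by
      obtain ⟨p, hp, h⟩ := exists_mem_W2_abs_sub_le hq0.le hq2 hy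
      exact ⟨⟨p, hp⟩, h⟩
  obtain ⟨b, hb⟩ := exists_hasSum_of_forall_near (fun p : W2 => q * p.1.1 + p.1.2)
    (one_lt_pow₀ hq1 two_ne_zero) hnear hx
  let d : ℕ → ℝ := fun j => if j % 2 = 0 then (b (j / 2)).1.1 else (b (j / 2)).1.2
  have hd_even : ∀ n, d (2 * n) = (b n).1.1 := fun n => by simp [d]
  have hd_odd : ∀ n, d (2 * n + 1) = (b n).1.2 := fun n => by
    simp [d, show (2 * n + 1) / 2 = n by omega]
  have hdW : ∀ n, (d (2 * n), d (2 * n + 1)) ∈ W2 := fun n => by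
    rw [hd_even, hd_odd]; exact (b n).2
  refine ⟨d, hdW, ?_⟩
  have hs :=
    summable_div_pow_succ_of_abs_le_one hq1 (isExtDigitSeq_of_forall_mem_W2 hdW).abs_le_one
  obtain ⟨A, hE⟩ : Summable fun n => d (2 * n) / q ^ (2 * n + 1) :=
    hs.comp_injective (mul_right_injective₀ (two_ne_zero' ℕ))
  obtain ⟨B, hO⟩ : Summable fun n => d (2 * n + 1) / q ^ (2 * n + 1 + 1) :=
    hs.comp_injective ((add_left_injective 1).comp (mul_right_injective₀ (two_ne_zero' ℕ)))
  have hblock : ∀ n, (q * (b n).1.1 + (b n).1.2) / (q ^ 2) ^ (n + 1) =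
      d (2 * n) / q ^ (2 * n + 1) + d (2 * n + 1) / q ^ (2 * n + 1 + 1) := fun n => by
    rw [hd_even, hd_odd, ← pow_mul]; field_simp; ring
  have hAB : A + B = x := ((hE.add hO).congr_fun hblock).unique hb
  rw [piQ, ← hAB]
  exact (HasSum.even_add_odd (f := fun j => d j / q ^ (j + 1)) hE hO).tsum_eq

lemma one_add_pow_le_inv_one_sub_mul {ε : ℝ} (hε : -1 ≤ ε) {n : ℕ} (hn : n * ε < 1) :
    (1 + ε) ^ n ≤ (1 - n * ε)⁻¹ := by
  calc (1 + ε) ^ n ≤ Real.exp ε ^ n :=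
        pow_le_pow_left₀ (by linarith) (by linarith [Real.add_one_le_exp ε]) n
    _ = Real.exp (n * ε) := (Real.exp_nat_mul ε n).symm
    _ ≤ (1 - n * ε)⁻¹ := by
        rw [le_inv_comm₀ (Real.exp_pos _) (by linarith), ← Real.exp_neg]
        linarith [Real.add_one_le_exp (-(n * ε))]

lemma pow_le_four_thirds_mul_pow {p q ε : ℝ} {n : ℕ} (hq : 0 ≤ q) (hp : 0 ≤ p) (hε : 0 ≤ ε)
    (hqp : q ≤ p * (1 + ε)) (hnε : n * ε ≤ 1 / 4) : q ^ n ≤ 4 / 3 * p ^ n :=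
  calc q ^ n ≤ (p * (1 + ε)) ^ n := by gcongr
    _ = p ^ n * (1 + ε) ^ n := mul_pow _ _ _
    _ ≤ p ^ n * (1 - n * ε)⁻¹ := by
        gcongr
        exact one_add_pow_le_inv_one_sub_mul (by linarith) (by linarith)
    _ ≤ 4 / 3 * p ^ n := by
        rw [mul_comm]
        gcongr
        rw [inv_le_comm₀ (by linarith) (by norm_num)]
        linarith

/-- Mean value bound: on `[L, ∞)` the derivative of `x ↦ ∑_{j<n} x^{-(j+1)}` is at most
`∑_{m ≥ 1} m L^{-(m+1)} = (L - 1)⁻²` in absolute value. -/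
lemma abs_sum_one_div_pow_sub_le {L a b : ℝ} (hL : 1 < L) (ha : L ≤ a) (hb : L ≤ b) (n : ℕ) :
    |∑ j ∈ range n, (1 / a ^ (j + 1) - 1 / b ^ (j + 1))| ≤ |a - b| / (L - 1) ^ 2 := by
  have hL0 : 0 < L := by linarith
  have ha0 : 0 < a := by linarith
  have hb0 : 0 < b := by linarith
  set t := L⁻¹ with ht
  have ht0 : 0 ≤ t := inv_nonneg.2 hL0.le
  have ht1 : t < 1 := inv_lt_one_of_one_lt₀ hL
  have hinv : |a⁻¹ - b⁻¹| ≤ |a - b| * t ^ 2 := by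
    rw [inv_sub_inv ha0.ne' hb0.ne', abs_div, abs_sub_comm, abs_of_pos (mul_pos ha0 hb0), ht,
      inv_pow, ← div_eq_mul_inv]
    gcongr
    nlinarith
  have hmax : max |a⁻¹| |b⁻¹| ≤ t := by
    rw [abs_of_pos (inv_pos.2 ha0), abs_of_pos (inv_pos.2 hb0)]
    exact max_le (inv_anti₀ hL0 ha) (inv_anti₀ hL0 hb)
  have hterm : ∀ j : ℕ,
      |1 / a ^ (j + 1) - 1 / b ^ (j + 1)| ≤ |a - b| * t ^ 2 * ((j + 1) * t ^ j) := by
    intro j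
    calc |1 / a ^ (j + 1) - 1 / b ^ (j + 1)| = |a⁻¹ ^ (j + 1) - b⁻¹ ^ (j + 1)| := by
          simp only [one_div, inv_pow]
      _ ≤ |a⁻¹ - b⁻¹| * (j + 1 : ℕ) * max |a⁻¹| |b⁻¹| ^ j := abs_pow_sub_pow_le ..
      _ ≤ |a - b| * t ^ 2 * ((j + 1) * t ^ j) := by
          push_cast
          rw [mul_assoc]
          gcongr
  have hgeom : HasSum (fun j : ℕ => ((j : ℝ) + 1) * t ^ j) (1 / (1 - t) ^ 2) := by
    simpa using hasSum_choose_mul_geometric_of_norm_lt_one 1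
      (by rwa [Real.norm_eq_abs, abs_of_nonneg ht0] : ‖t‖ < 1)
  calc |∑ j ∈ range n, (1 / a ^ (j + 1) - 1 / b ^ (j + 1))|
      ≤ ∑ j ∈ range n, |a - b| * t ^ 2 * ((j + 1) * t ^ j) :=
        (abs_sum_le_sum_abs _ _).trans (sum_le_sum fun j _ => hterm j)
    _ ≤ |a - b| * t ^ 2 * (1 / (1 - t) ^ 2) := by
        rw [← mul_sum]
        gcongr
        exact sum_le_hasSum _ (fun j _ => by positivity) hgeom
    _ = |a - b| / (L - 1) ^ 2 := by
        rw [ht]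
        field_simp

namespace IsBonacci

variable {k : ℕ} {qk : ℝ}

lemma pow_mul_two_sub (h : IsBonacci k qk) : qk ^ k * (2 - qk) = 1 := by
  have := geom_sum_mul qk k
  rw [← h.2] at this
  linear_combination -this

lemma natCast_le_pow (h : IsBonacci k qk) : (k : ℝ) ≤ qk ^ k := by
  rw [h.2]
  simpa using card_nsmul_le_sum (range k) _ 1 fun i _ => one_le_pow₀ h.1.1.le

lemma sum_range_one_div_pow_succ (h : IsBonacci k qk) :
    ∑ j ∈ range k, 1 / qk ^ (j + 1) = 1 := by
  have hqk0 : qk ≠ 0 := by linarith [h.1.1]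
  have hpow : ∀ j ∈ range k, 1 / qk ^ (j + 1) = qk ^ (k - 1 - j) / qk ^ k := fun j hj => by
    rw [div_eq_div_iff (pow_ne_zero _ hqk0) (pow_ne_zero _ hqk0), one_mul, ← pow_add,
      show k - 1 - j + (j + 1) = k by have := mem_range.1 hj; omega]
  rw [sum_congr rfl hpow, ← sum_div, sum_range_reflect (qk ^ ·) k, ← h.2,
    div_self (pow_ne_zero _ hqk0)]

lemma le_of_nine_le (h : IsBonacci k qk) (hk : 9 ≤ k) : 199 / 100 ≤ qk := by
  have h₁ := h.pow_mul_two_sub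
  have hk' : (9 : ℝ) ≤ qk ^ k := le_trans (by exact_mod_cast hk) h.natCast_le_pow
  have h₂ : 17 / 9 ≤ qk := by nlinarith
  have h₃ : 300 ≤ qk ^ k :=
    calc (300 : ℝ) ≤ (17 / 9) ^ 9 := by norm_num
      _ ≤ qk ^ 9 := pow_le_pow_left₀ (by norm_num) h₂ 9
      _ ≤ qk ^ k := pow_le_pow_right₀ (by linarith) hk
  nlinarith

lemma eight_mul_add_sixteen_le_pow (h : IsBonacci k qk) (hk : 9 ≤ k) :
    8 * (k : ℝ) + 16 ≤ qk ^ (2 * k + 7) := by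
  have hqk0 : 0 < qk := by linarith [h.1.1]
  have h₁ : (k : ℝ) ^ 2 * qk ^ 7 ≤ qk ^ (2 * k + 7) := by
    rw [pow_add, pow_mul']
    gcongr
    exact h.natCast_le_pow
  have h₂ : (2 : ℝ) ≤ qk ^ 7 :=
    le_trans (by norm_num) (pow_le_pow_left₀ (by norm_num) (h.le_of_nine_le hk) 7)
  have hk' : (9 : ℝ) ≤ k := by exact_mod_cast hk
  nlinarith

end IsBonacci

lemma abs_pow_mul_one_sub_sum_le_half {k : ℕ} (hk : 9 ≤ k) {qk : ℝ} (hqk : IsBonacci k qk)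
    {q : ℝ} (hclose : |q - qk| ≤ qk ^ (-(2 * (k : ℤ)) - 6)) :
    |q ^ (2 * k + 4) * (1 - ∑ j ∈ range k, 1 / q ^ (j + 1))| ≤ 1 / 2 := by
  have hqk199 := hqk.le_of_nine_le hk
  have hqk0 : 0 < qk := by linarith
  set ε := 1 / qk ^ (2 * k + 7) with hε
  have hε0 : 0 ≤ ε := by positivity
  have hδ : |q - qk| ≤ qk * ε := by
    rwa [show -(2 * (k : ℤ)) - 6 = 1 - ((2 * k + 7 : ℕ) : ℤ) by push_cast; ring,
      zpow_sub₀ hqk0.ne', zpow_one, zpow_natCast, ← mul_one_div] at hclose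
  have hkε : ((2 * k + 4 : ℕ) : ℝ) * ε ≤ 1 / 4 := by
    rw [hε, mul_one_div, div_le_div_iff₀ (by positivity) (by norm_num)]
    push_cast
    linarith [hqk.eight_mul_add_sixteen_le_pow hk]
  have hq_ge : 19 / 10 ≤ q := by
    have hk' : (9 : ℝ) ≤ k := by exact_mod_cast hk
    have : ε ≤ 1 / 88 := by push_cast at hkε; nlinarith
    nlinarith [(abs_le.1 hδ).1]
  have hpow : q ^ (2 * k + 4) ≤ 4 / 3 * qk ^ (2 * k + 4) :=
    pow_le_four_thirds_mul_pow (by linarith) hqk0.le hε0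
      (by linarith [(abs_le.1 hδ).2, mul_one_add qk ε]) hkε
  have hsum : |1 - ∑ j ∈ range k, 1 / q ^ (j + 1)| ≤ |q - qk| / (19 / 10 - 1) ^ 2 := by
    have := abs_sum_one_div_pow_sub_le (by norm_num) (by linarith : 19 / 10 ≤ qk) hq_ge k
    rwa [sum_sub_distrib, hqk.sum_range_one_div_pow_succ, abs_sub_comm qk] at this
  calc |q ^ (2 * k + 4) * (1 - ∑ j ∈ range k, 1 / q ^ (j + 1))|
      = q ^ (2 * k + 4) * |1 - ∑ j ∈ range k, 1 / q ^ (j + 1)| := by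
        rw [abs_mul, abs_of_pos (by positivity)]
    _ ≤ 4 / 3 * qk ^ (2 * k + 4) * (qk * ε / (19 / 10 - 1) ^ 2) := by
        gcongr
        exact hsum.trans (by gcongr)
    _ = 400 / 243 / qk ^ 2 := by
        rw [hε]
        field_simp
        ring
    _ ≤ 1 / 2 := by
        rw [div_le_iff₀ (by positivity)]
        nlinarith


noncomputable def onesZerosThen (k m : ℕ) (d : ℕ → ℝ) : ℕ → ℝ := fun j =>
  if j < k then 1 else if j < m then 0 else d (j - m)

section onesZerosThen

variable {k m : ℕ} {d : ℕ → ℝ}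

lemma onesZerosThen_add (hkm : k ≤ m) (j : ℕ) : onesZerosThen k m d (m + j) = d j := by
  rw [onesZerosThen, if_neg (by omega), if_neg (by omega), Nat.add_sub_cancel_left]

lemma IsExtDigitSeq.onesZerosThen (hd : IsExtDigitSeq d) : IsExtDigitSeq (onesZerosThen k m d) :=
  fun j => by
    unfold _root_.onesZerosThen
    split_ifs
    exacts [by norm_num, by norm_num, hd _]

lemma piQ_onesZerosThen {q : ℝ} (hq : 1 < q) (hkm : k ≤ m) (hd : IsExtDigitSeq d) :
    piQ q (onesZerosThen k m d) = ∑ j ∈ range k, 1 / q ^ (j + 1) + piQ q d / q ^ m := by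
  rw [piQ_eq_sum_range_add (summable_div_pow_succ_of_abs_le_one hq hd.onesZerosThen.abs_le_one) m]
  congr 1
  · obtain ⟨l, rfl⟩ := Nat.exists_eq_add_of_le hkm
    have h₁ : ∀ j ∈ range k, onesZerosThen k (k + l) d j / q ^ (j + 1) = 1 / q ^ (j + 1) :=
      fun j hj => by simp [onesZerosThen, mem_range.1 hj]
    have h₂ : ∀ j ∈ range l, onesZerosThen k (k + l) d (k + j) / q ^ (k + j + 1) = 0 :=
      fun j hj => by simp [onesZerosThen, mem_range.1 hj]
    rw [sum_range_add, sum_congr rfl h₁, sum_congr rfl h₂, sum_const_zero, add_zero]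
  · simp_rw [add_comm _ m, onesZerosThen_add hkm]

end onesZerosThen

theorem expansion_of_one_with_W2_tail
    (k : ℕ) (hk : 9 ≤ k) (qk : ℝ) (hqk : IsBonacci k qk)
    (q : ℝ) (hq : q ∈ Set.Ioo (1 : ℝ) 2)
    (hclose : |q - qk| ≤ qk ^ (-(2 * (k : ℤ)) - 6)) :
    ∃ c : ℕ → ℝ, IsExtDigitSeq c ∧ piQ q c = 1 ∧
      (∀ j < k, c j = 1) ∧ (∀ j, k ≤ j → j < 2 * k + 4 → c j = 0) ∧
      ∀ n : ℕ, (c (2 * k + 4 + 2 * n), c (2 * k + 4 + 2 * n + 1)) ∈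
        ({(-1, 0), (0, -1), (0, 0), (0, 1), (1, 0)} : Set (ℝ × ℝ)) := by
  obtain ⟨d, hdW, hd⟩ :=
    exists_W2_expansion hq.1 hq.2.le (abs_pow_mul_one_sub_sum_le_half hk hqk hclose)
  have hkm : k ≤ 2 * k + 4 := by omega
  have hdigits := isExtDigitSeq_of_forall_mem_W2 hdW
  refine ⟨onesZerosThen k (2 * k + 4) d, hdigits.onesZerosThen, ?_,
    fun j hj => by simp [onesZerosThen, hj], fun j h₁ h₂ => by simp [onesZerosThen, h₂, h₁.not_gt],
    fun n => by rw [onesZerosThen_add hkm, add_assoc, onesZerosThen_add hkm]; exact hdW n⟩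
  have hq0 : q ^ (2 * k + 4) ≠ 0 := pow_ne_zero _ (by linarith [hq.1])
  rw [piQ_onesZerosThen hq.1 hkm hdigits, hd, mul_div_cancel_left₀ _ hq0, add_sub_cancel]
end

section
/- Let k ≥ 9 be an integer. If q ∈ (1,2) satisfies |q − q_k| < q_k^{−2k−6}, then the Hausdorff distance between the compact sets π_q(S_{k−1}) and π_{q_k}(S_{k−1}) satisfies d_H(π_q(S_{k−1}), π_{q_k}(S_{k−1})) < q_k^{−2k−4}. -/
open Set

lemma summable_digit {q : ℝ} (hq : 1 < q) (a : ℕ → ℝ) (ha : IsDigitSeq a) :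
    Summable (fun j : ℕ => a j / q ^ (j + 1)) := by
  have hq0 : (0:ℝ) < q := lt_trans one_pos hq
  have hgeo : Summable (fun j : ℕ => (1/q) ^ (j + 1)) := by
    simpa [pow_succ] using
      (summable_geometric_of_lt_one (by positivity) ((div_lt_one hq0).mpr hq)).mul_right (1/q)
  apply Summable.of_nonneg_of_le _ _ hgeo
  · intro j
    rcases ha j with h | h <;> simp [h] <;> positivity
  · intro j
    rcases ha j with h | h
    · simp [h]; positivity
    · simp [h, div_pow]

lemma inv_pow_diff_bound {p q m : ℝ} (hm : 1 < m) (hmp : m ≤ p) (hmq : m ≤ q) :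
    ∀ n : ℕ, |1 / p ^ n - 1 / q ^ n| ≤ n * (1 / m) ^ (n + 1) * |p - q| := by
  have hm0 : (0:ℝ) < m := lt_trans one_pos hm
  have hp0 : (0:ℝ) < p := lt_of_lt_of_le hm0 hmp
  have hq0 : (0:ℝ) < q := lt_of_lt_of_le hm0 hmq
  intro n
  induction n with
  | zero => simp
  | succ n ih =>
    have key : 1 / p ^ (n+1) - 1 / q ^ (n+1)
        = (1/p) * (1 / p ^ n - 1 / q ^ n) + (1/p - 1/q) * (1 / q ^ n) := by
      field_simp
      ring
    rw [key]
    have h1 : |(1/p) * (1 / p ^ n - 1 / q ^ n)| ≤ (1/m) * ((n : ℝ) * (1/m)^(n+1) * |p - q|) := by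
      rw [abs_mul]
      apply mul_le_mul _ ih (abs_nonneg _) (by positivity)
      rw [abs_of_pos (by positivity)]
      exact one_div_le_one_div_of_le hm0 hmp
    have h2 : |(1/p - 1/q) * (1 / q ^ n)| ≤ ((1/m)^2 * |p - q|) * (1/m)^n := by
      rw [abs_mul]
      have e1 : |1/p - 1/q| ≤ (1/m)^2 * |p - q| := by
        have hpq : 1/p - 1/q = (q - p) / (p * q) := by field_simp
        have hm2 : m^2 ≤ p * q := by nlinarith
        rw [hpq, abs_div, abs_of_pos (by positivity : (0:ℝ) < p * q), abs_sub_comm]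
        calc |p - q| / (p * q) ≤ |p - q| / m^2 :=
              div_le_div_of_nonneg_left (abs_nonneg _) (by positivity) hm2
          _ = (1/m)^2 * |p - q| := by field_simp
      have e2 : |1 / q ^ n| ≤ (1/m)^n := by
        rw [abs_of_pos (by positivity), div_pow, one_pow]
        exact one_div_le_one_div_of_le (by positivity) (pow_le_pow_left₀ hm0.le hmq n)
      exact mul_le_mul e1 e2 (abs_nonneg _) (by positivity)
    calc |(1/p) * (1 / p ^ n - 1 / q ^ n) + (1/p - 1/q) * (1 / q ^ n)|
        ≤ |(1/p) * (1 / p ^ n - 1 / q ^ n)| + |(1/p - 1/q) * (1 / q ^ n)| := abs_add_le _ _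
      _ ≤ (1/m) * ((n : ℝ) * (1/m)^(n+1) * |p - q|) + ((1/m)^2 * |p - q|) * (1/m)^n :=
          add_le_add h1 h2
      _ = ((n:ℕ) + 1 : ℝ) * (1/m) ^ (n + 1 + 1) * |p - q| := by ring
      _ = ((n + 1 : ℕ) : ℝ) * (1/m) ^ (n + 1 + 1) * |p - q| := by push_cast; ring

lemma abs_piQ_sub_piQ {p q m : ℝ} (hm : 1 < m) (hmp : m ≤ p) (hmq : m ≤ q)
    (a : ℕ → ℝ) (ha : IsDigitSeq a) :
    |piQ p a - piQ q a| ≤ |p - q| / (m - 1)^2 := by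
  have hm0 : (0:ℝ) < m := lt_trans one_pos hm
  have hp : 1 < p := lt_of_lt_of_le hm hmp
  have hq : 1 < q := lt_of_lt_of_le hm hmq
  have hsp := summable_digit hp a ha
  have hsq := summable_digit hq a ha
  have hrn : ‖(1:ℝ)/m‖ < 1 := by
    rw [Real.norm_eq_abs, abs_of_nonneg (by positivity)]
    exact (div_lt_one hm0).mpr hm
  have H0 : HasSum (fun n : ℕ => (n:ℝ) * (1/m) ^ n) ((1/m) / (1 - 1/m)^2) :=
    hasSum_coe_mul_geometric_of_norm_lt_one hrn
  have H1 : HasSum (fun n : ℕ => ((n:ℝ)+1) * (1/m) ^ (n+1)) ((1/m) / (1 - 1/m)^2) := by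
    have H1' : HasSum (fun n : ℕ => ((n+1 : ℕ) : ℝ) * (1/m) ^ (n+1)) ((1/m) / (1 - 1/m)^2) :=
      (hasSum_nat_add_iff (f := fun n : ℕ => (n:ℝ) * (1/m)^n) 1).mpr (by simpa using H0)
    have hfun : (fun n : ℕ => ((n+1 : ℕ) : ℝ) * (1/m) ^ (n+1))
        = fun n : ℕ => ((n:ℝ)+1) * (1/m) ^ (n+1) := by
      funext n; push_cast; ring
    rwa [hfun] at H1'
  have hval : |p - q| * (1/m) * ((1/m) / (1 - 1/m)^2) = |p - q| / (m - 1)^2 := by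
    have hm1 : m - 1 ≠ 0 := by intro h; nlinarith
    have h1m : 1 - 1/m = (m-1)/m := by field_simp
    rw [h1m]
    field_simp
  have Hfin : HasSum (fun n : ℕ => |p - q| * (1/m) * (((n:ℝ)+1) * (1/m) ^ (n+1)))
      (|p - q| / (m - 1)^2) := by
    rw [← hval]; exact H1.mul_left _
  have heq : piQ p a - piQ q a = ∑' j : ℕ, (a j / p ^ (j+1) - a j / q ^ (j+1)) :=
    (Summable.tsum_sub hsp hsq).symm
  rw [show |piQ p a - piQ q a| = ‖piQ p a - piQ q a‖ from (Real.norm_eq_abs _).symm, heq]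
  refine tsum_of_norm_bounded Hfin ?_
  intro j
  rw [Real.norm_eq_abs]
  have hsplit : a j / p ^ (j+1) - a j / q ^ (j+1) = a j * (1/p^(j+1) - 1/q^(j+1)) := by ring
  rw [hsplit, abs_mul]
  have haj : |a j| ≤ 1 := by rcases ha j with h | h <;> simp [h]
  have hb := inv_pow_diff_bound hm hmp hmq (j+1)
  calc |a j| * |1/p^(j+1) - 1/q^(j+1)|
      ≤ 1 * (((j:ℝ)+1) * (1/m)^(j+1+1) * |p - q|) := by
        apply mul_le_mul haj _ (abs_nonneg _) zero_le_one
        have : ((j+1 : ℕ) : ℝ) = (j:ℝ) + 1 := by push_cast; ring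
        rw [← this]
        exact hb
    _ = |p - q| * (1/m) * (((j:ℝ)+1) * (1/m) ^ (j+1)) := by ring


theorem hausdorff_distance_of_proj_Sk
    (k : ℕ) (hk : 9 ≤ k) (qk : ℝ) (hqk : IsBonacci k qk)
    (q : ℝ) (hq : q ∈ Set.Ioo (1 : ℝ) 2)
    (hclose : |q - qk| < qk ^ (-(2 * (k : ℤ)) - 6)) :
    Metric.hausdorffDist (piQ q '' Sset (k - 1)) (piQ qk '' Sset (k - 1)) <
      qk ^ (-(2 * (k : ℤ)) - 4) := by
  obtain ⟨hq1, hq2⟩ := hq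
  obtain ⟨⟨hqk1, hqk2⟩, hpoly⟩ := hqk
  have hqk0 : (0:ℝ) < qk := lt_trans one_pos hqk1
  -- algebraic identity: qk^k * (2 - qk) = 1
  have hiden : qk ^ k * (2 - qk) = 1 := by
    have hgs : (∑ i ∈ Finset.range k, qk ^ i) * (qk - 1) = qk ^ k - 1 := geom_sum_mul qk k
    rw [← hpoly] at hgs
    nlinarith [hgs]
  have hpk : (9:ℝ) ≤ qk ^ k := by
    have h1 : (k:ℝ) ≤ ∑ i ∈ Finset.range k, qk ^ i := by
      calc (k:ℝ) = ∑ _i ∈ Finset.range k, (1:ℝ) := by simp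
        _ ≤ _ := Finset.sum_le_sum (fun i _ => one_le_pow₀ hqk1.le)
    have h9 : (9:ℝ) ≤ (k:ℝ) := by exact_mod_cast hk
    rw [hpoly]
    linarith
  have hqk17 : (17:ℝ)/9 ≤ qk := by nlinarith [mul_le_mul_of_nonneg_right hpk (by linarith : (0:ℝ) ≤ 2 - qk)]
  -- the distance |q - qk| is at most 81/289
  have hexp : qk ^ (-(2 * (k:ℤ)) - 6) ≤ qk ^ (-2 : ℤ) := by
    apply zpow_le_zpow_right₀ hqk1.le
    have : (0:ℤ) ≤ (k:ℤ) := Int.natCast_nonneg k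
    omega
  have h2 : qk ^ (-2:ℤ) ≤ 81/289 := by
    rw [show (-2:ℤ) = -((2:ℕ):ℤ) by norm_num, zpow_neg, zpow_natCast]
    rw [inv_le_comm₀ (by positivity) (by norm_num)]
    nlinarith [hqk17]
  have hδsmall : |q - qk| ≤ 81/289 := le_of_lt (lt_of_lt_of_le hclose (hexp.trans h2))
  set m : ℝ := min q qk with hmdef
  have hmq : m ≤ q := min_le_left _ _
  have hmqk : m ≤ qk := min_le_right _ _
  have hm1 : 1 < m := lt_min hq1 hqk1
  have hqlow : qk - 81/289 ≤ q := by
    have := (abs_le.mp hδsmall).1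
    linarith
  have hmlow : qk - 81/289 ≤ m := le_min hqlow (by linarith)
  have hminv : 1/qk ≤ m - 1 := by
    have h1 : 1/qk ≤ qk - 81/289 - 1 := by
      rw [div_le_iff₀ hqk0]
      nlinarith [hqk17]
    linarith
  have hbound : Metric.hausdorffDist (piQ q '' Sset (k-1)) (piQ qk '' Sset (k-1))
      ≤ |q - qk| / (m - 1)^2 := by
    apply Metric.hausdorffDist_le_of_mem_dist
      (div_nonneg (abs_nonneg _) (sq_nonneg _))
    · rintro x ⟨a, haS, rfl⟩
      exact ⟨piQ qk a, Set.mem_image_of_mem _ haS, by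
        rw [Real.dist_eq]
        exact abs_piQ_sub_piQ hm1 hmq hmqk a haS.1⟩
    · rintro y ⟨a, haS, rfl⟩
      exact ⟨piQ q a, Set.mem_image_of_mem _ haS, by
        rw [Real.dist_eq, abs_sub_comm]
        exact abs_piQ_sub_piQ hm1 hmq hmqk a haS.1⟩
  have hq1m : 1 ≤ (m - 1) * qk := (div_le_iff₀ hqk0).mp hminv
  have hfrac : |q - qk| / (m - 1)^2 ≤ |q - qk| * qk^2 := by
    rw [div_le_iff₀ (pow_pos (by linarith : (0:ℝ) < m - 1) 2)]
    have hsq : 1 ≤ ((m-1)*qk)^2 := by nlinarith [hq1m]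
    nlinarith [mul_le_mul_of_nonneg_left hsq (abs_nonneg (q - qk))]
  have hlast : |q - qk| * qk^2 < qk ^ (-(2*(k:ℤ)) - 4) := by
    have h1 : |q - qk| * qk^2 < qk ^ (-(2*(k:ℤ)) - 6) * qk^2 :=
      mul_lt_mul_of_pos_right hclose (by positivity)
    have h2' : qk ^ (-(2*(k:ℤ)) - 6) * qk^2 = qk ^ (-(2*(k:ℤ)) - 4) := by
      rw [← zpow_natCast qk 2, ← zpow_add₀ (ne_of_gt hqk0)]
      congr 1
      push_cast
      ring
    linarith [h1, h2'.le, h2'.ge]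
  linarith [hbound, hfrac, hlast]
end
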